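/- The operators (S_l)_{l∈L} satisfy the Cuntz relations S_l* S_{l'} = δ_{l,l'} I for all l, l' ∈ L and Σ_{l∈L} S_l S_l* = I on L²(μ_B) if and only if (B, L) is a Hadamard pair. -/

import Mathlib

open MeasureTheory Complex Filter Topology

noncomputable section

def expv {d : ℕ} (t x : Fin d → ℝ) : ℂ :=
  Complex.exp (2 * Real.pi * Complex.I * (∑ i, t i * x i))

def Rmat {d : ℕ} (R : Matrix (Fin d) (Fin d) ℤ) : Matrix (Fin d) (Fin d) ℝ :=
  R.map Int.cast

def vecR {d : ℕ} (b : Fin d → ℤ) : Fin d → ℝ := fun i => (b i : ℝ)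

def tauB {d : ℕ} (R : Matrix (Fin d) (Fin d) ℤ) (b : Fin d → ℤ) (x : Fin d → ℝ) :
    Fin d → ℝ :=
  (Rmat R)⁻¹.mulVec (x + vecR b)

def Expansive {d : ℕ} (R : Matrix (Fin d) (Fin d) ℤ) : Prop :=
  ∀ z : ℂ, (R.map (Int.cast : ℤ → ℂ)).charpoly.IsRoot z → 1 < ‖z‖

/-- The `N × N` matrix `(1/√N) (e^{2π i (R⁻¹ b) · l})_{b ∈ B, l ∈ L}`. -/
def hadMat {d : ℕ} (R : Matrix (Fin d) (Fin d) ℤ) (B L : Finset (Fin d → ℤ)) :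
    Matrix B L ℂ :=
  fun b l => ((Real.sqrt (B.card) : ℝ) : ℂ)⁻¹ *
    expv ((Rmat R)⁻¹.mulVec (vecR (b : Fin d → ℤ))) (vecR (l : Fin d → ℤ))

/-- `(B, L)` is a Hadamard pair: the matrix `hadMat R B L` is unitary. -/
def IsHadamardPair {d : ℕ} (R : Matrix (Fin d) (Fin d) ℤ)
    (B L : Finset (Fin d → ℤ)) : Prop :=
  (hadMat R B L).conjTranspose * hadMat R B L = 1 ∧ hadMat R B L * (hadMat R B L).conjTranspose = 1

/-!
The self-similarity `μ = N⁻¹ Σ_b (τ_b)_* μ` and `𝓡 ∘ τ_b = id` (a.e.) give the transfer formula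
`∫ F x (𝓡 x) dμ = N⁻¹ Σ_b ∫ F (τ_b y) y dμ`. Applied to `⟪S_{l'} f, S_l g⟫` it yields
`⟪S_{l'} f, S_l g⟫ = m(l - l') ∫ e_ξ f̄ g`, where `m(t) = N⁻¹ Σ_b e^{2πi (R⁻¹b)·t}` is the
`(l', l)` entry of `H* H`; testing with `f = 1`, `g = e_{-ξ}` shows that the first Cuntz relation
is exactly `H* H = 1`. The same formula identifies `S_l* f` with `N⁻¹ Σ_b e_{-l}(τ_b ·) f(τ_b ·)`,
which at each point `x` is, up to a unimodular factor, `N^{-1/2} (H* v)_l` with `v_b = f(τ_b x)`;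
so `Σ_l S_l S_l* = 1` follows from `H H* = 1`, i.e. from `H*` being an isometry. As `H` is
square, `H* H = 1` and `H H* = 1` are equivalent.
-/

open scoped ENNReal ComplexConjugate Matrix InnerProductSpace

lemma Matrix.star_conjTranspose_mulVec_dotProduct {m n α : Type*} [Fintype m] [Fintype n]
    [DecidableEq m] [Semiring α] [StarRing α] {A : Matrix m n α} (hA : A * Aᴴ = 1)
    (v w : m → α) :
    star (Aᴴ *ᵥ v) ⬝ᵥ (Aᴴ *ᵥ w) = star v ⬝ᵥ w := by
  rw [Matrix.star_mulVec, Matrix.conjTranspose_conjTranspose, ← Matrix.dotProduct_mulVec,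
    Matrix.mulVec_mulVec, hA, Matrix.one_mulVec]

section HilbertSpace

variable {E : Type*} [NormedAddCommGroup E] [InnerProductSpace ℂ E] [CompleteSpace E]

lemma ContinuousLinearMap.adjoint_comp_eq_zero_iff (T T' : E →L[ℂ] E) :
    (adjoint T).comp T' = 0 ↔ ∀ f g, ⟪T' f, T g⟫_ℂ = 0 := by
  refine ⟨fun h f g => ?_, fun h => ext fun f => ext_inner_right ℂ fun g => ?_⟩
  · rw [← adjoint_inner_left, ← comp_apply, h, zero_apply, inner_zero_left]
  · rw [comp_apply, adjoint_inner_left, h, zero_apply, inner_zero_left]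

lemma ContinuousLinearMap.adjoint_comp_eq_one_iff (T T' : E →L[ℂ] E) :
    (adjoint T).comp T' = 1 ↔ ∀ f g, ⟪T' f, T g⟫_ℂ = ⟪f, g⟫_ℂ := by
  refine ⟨fun h f g => ?_, fun h => ext fun f => ext_inner_right ℂ fun g => ?_⟩
  · rw [← adjoint_inner_left, ← comp_apply, h, one_apply_eq_self]
  · rw [comp_apply, adjoint_inner_left, h, one_apply_eq_self]

end HilbertSpace

section ComplexL2

variable {α : Type*} [MeasurableSpace α] {μ : Measure α}

lemma MeasureTheory.L2.inner_eq_integral_conj_mul (f g : Lp ℂ 2 μ) :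
    ⟪f, g⟫_ℂ = ∫ x, conj (f x) * g x ∂μ := by
  simp only [L2.inner_def, RCLike.inner_apply']

lemma MeasureTheory.MemLp.integrable_conj_mul {f g : α → ℂ} (hf : MemLp f 2 μ)
    (hg : MemLp g 2 μ) : Integrable (fun x => conj (f x) * g x) μ :=
  hf.star.integrable_mul hg

end ComplexL2

section ExpChar

variable {d : ℕ}

lemma expv_comm (t x : Fin d → ℝ) : expv t x = expv x t := by
  simp only [expv, mul_comm (t _)]

lemma expv_zero_left (x : Fin d → ℝ) : expv 0 x = 1 := by
  simp [expv]

lemma expv_zero_right (t : Fin d → ℝ) : expv t 0 = 1 := by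
  simp [expv]

lemma expv_add_right (t x y : Fin d → ℝ) : expv t (x + y) = expv t x * expv t y := by
  simp only [expv, ← Complex.exp_add, Pi.add_apply, mul_add, Finset.sum_add_distrib]
  push_cast
  ring_nf

lemma expv_add_left (t s x : Fin d → ℝ) : expv (t + s) x = expv t x * expv s x := by
  rw [expv_comm, expv_add_right, expv_comm x t, expv_comm x s]

lemma conj_expv (t x : Fin d → ℝ) : conj (expv t x) = expv (-t) x := by
  simp only [expv, ← Complex.exp_conj, map_mul, Complex.conj_I, Complex.conj_ofReal, map_ofNat,
    Pi.neg_apply, neg_mul, Finset.sum_neg_distrib]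
  push_cast
  ring_nf

lemma conj_expv_right (t x : Fin d → ℝ) : conj (expv t x) = expv t (-x) := by
  rw [expv_comm, conj_expv, expv_comm]

lemma conj_expv_mul_self (t x : Fin d → ℝ) : conj (expv t x) * expv t x = 1 := by
  rw [conj_expv, ← expv_add_left, neg_add_cancel, expv_zero_left]

lemma norm_expv (t x : Fin d → ℝ) : ‖expv t x‖ = 1 := by
  simp [expv, Complex.norm_exp]

lemma continuous_expv (t : Fin d → ℝ) : Continuous (expv t) := by
  unfold expv
  fun_prop

lemma expv_mulVec (t : Fin d → ℝ) (M : Matrix (Fin d) (Fin d) ℝ) (y : Fin d → ℝ) :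
    expv t (M *ᵥ y) = expv (t ᵥ* M) y := by
  simp only [expv]
  congr 3
  exact Matrix.dotProduct_mulVec t M y

lemma expv_tauB (R : Matrix (Fin d) (Fin d) ℤ) (b : Fin d → ℤ) (t y : Fin d → ℝ) :
    expv t (tauB R b y) = expv ((Rmat R)⁻¹ *ᵥ vecR b) t * expv (t ᵥ* (Rmat R)⁻¹) y := by
  rw [tauB, Matrix.mulVec_add, expv_add_right, expv_mulVec, expv_comm t, mul_comm]

end ExpChar

section Dilation

variable {d : ℕ} {R : Matrix (Fin d) (Fin d) ℤ}

lemma isUnit_det_Rmat (hR : Expansive R) : IsUnit (Rmat R).det := by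
  have hC : IsUnit (R.map (Int.cast : ℤ → ℂ)) := by
    by_contra hu
    have h0 := hR 0 (Matrix.mem_spectrum_iff_isRoot_charpoly.1 ((spectrum.zero_mem_iff ℂ).2 hu))
    norm_num at h0
  have hdetC := ((Matrix.isUnit_iff_isUnit_det _).1 hC).ne_zero
  rw [← Int.cast_det] at hdetC
  rw [Rmat, isUnit_iff_ne_zero, ← Int.cast_det]
  exact_mod_cast hdetC

lemma mulVec_tauB_sub (hR : IsUnit (Rmat R).det) (b : Fin d → ℤ) (y : Fin d → ℝ) :
    Rmat R *ᵥ tauB R b y - vecR b = y := by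
  rw [tauB, Matrix.mulVec_mulVec, Matrix.mul_nonsing_inv _ hR, Matrix.one_mulVec,
    add_sub_cancel_right]

lemma continuous_tauB (R : Matrix (Fin d) (Fin d) ℤ) (b : Fin d → ℤ) : Continuous (tauB R b) :=
  Continuous.matrix_mulVec continuous_const (continuous_id.add continuous_const)

lemma measurable_tauB (R : Matrix (Fin d) (Fin d) ℤ) (b : Fin d → ℤ) : Measurable (tauB R b) :=
  (continuous_tauB R b).measurable

end Dilation

section SelfSimilarMeasure

variable {α ι : Type*} [MeasurableSpace α] {μ : Measure α} {B : Finset ι} {τ : ι → α → α}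
  {N : ℕ}

lemma map_le_smul_of_eq_inv_smul_sum_map (hμ : μ = (N : ℝ≥0∞)⁻¹ • ∑ b ∈ B, μ.map (τ b))
    (hN : N ≠ 0) {b : ι} (hb : b ∈ B) : μ.map (τ b) ≤ (N : ℝ≥0∞) • μ := by
  have hsum : (N : ℝ≥0∞) • μ = ∑ b ∈ B, μ.map (τ b) := by
    conv_lhs => rw [hμ]
    rw [smul_smul, ENNReal.mul_inv_cancel (by exact_mod_cast hN) (ENNReal.natCast_ne_top N),
      one_smul]
  rw [hsum]
  exact Finset.single_le_sum (f := fun b => μ.map (τ b)) (fun _ _ => Measure.zero_le _) hb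

lemma MeasureTheory.MemLp.comp_of_eq_inv_smul_sum_map {F : Type*} [NormedAddCommGroup F]
    {p : ℝ≥0∞} (hμ : μ = (N : ℝ≥0∞)⁻¹ • ∑ b ∈ B, μ.map (τ b)) (hN : N ≠ 0) {b : ι} (hb : b ∈ B)
    (hτ : Measurable (τ b)) {f : α → F} (hf : MemLp f p μ) :
    MemLp (fun y => f (τ b y)) p μ := by
  have h := (hf.smul_measure (ENNReal.natCast_ne_top N)).mono_measure
    (map_le_smul_of_eq_inv_smul_sum_map hμ hN hb)
  exact (memLp_map_measure_iff h.1 hτ.aemeasurable).1 h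

lemma integral_eq_inv_smul_sum_integral_comp {E : Type*} [NormedAddCommGroup E]
    [NormedSpace ℝ E] (hμ : μ = (N : ℝ≥0∞)⁻¹ • ∑ b ∈ B, μ.map (τ b)) (hN : N ≠ 0)
    (hτ : ∀ b, Measurable (τ b)) {f : α → E} (hf : Integrable f μ) :
    ∫ x, f x ∂μ = (N : ℝ)⁻¹ • ∑ b ∈ B, ∫ y, f (τ b y) ∂μ := by
  have hmap : ∀ b ∈ B, Integrable f (μ.map (τ b)) := fun b hb =>
    (hf.smul_measure (ENNReal.natCast_ne_top N)).mono_measure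
      (map_le_smul_of_eq_inv_smul_sum_map hμ hN hb)
  conv_lhs => rw [hμ]
  rw [integral_smul_measure, integral_finsetSum_measure hmap, ENNReal.toReal_inv,
    ENNReal.toReal_natCast]
  congr 1
  exact Finset.sum_congr rfl fun b hb => integral_map (hτ b).aemeasurable (hmap b hb).1

lemma integral_comp_eq_inv_smul_sum_integral {E : Type*} [NormedAddCommGroup E]
    [NormedSpace ℝ E] (hμ : μ = (N : ℝ≥0∞)⁻¹ • ∑ b ∈ B, μ.map (τ b)) (hN : N ≠ 0)
    (hτ : ∀ b, Measurable (τ b)) {𝓡 : α → α} (h𝓡 : ∀ b ∈ B, ∀ᵐ y ∂μ, 𝓡 (τ b y) = y)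
    {F : α → α → E} (hF : Integrable (fun x => F x (𝓡 x)) μ) :
    ∫ x, F x (𝓡 x) ∂μ = (N : ℝ)⁻¹ • ∑ b ∈ B, ∫ y, F (τ b y) y ∂μ := by
  rw [integral_eq_inv_smul_sum_integral_comp hμ hN hτ hF]
  congr 1
  refine Finset.sum_congr rfl fun b hb => integral_congr_ae ?_
  filter_upwards [h𝓡 b hb] with y hy
  rw [hy]

lemma ae_comp_of_ae_restrict_image (hμ : μ = (N : ℝ≥0∞)⁻¹ • ∑ b ∈ B, μ.map (τ b))
    (hN : N ≠ 0) {b : ι} (hb : b ∈ B) (hτ : Measurable (τ b)) {X : Set α} (hX : μ Xᶜ = 0)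
    {P : α → Prop} (h : ∀ᵐ x ∂μ.restrict (τ b '' X), P x) : ∀ᵐ y ∂μ, P (τ b y) := by
  rw [ae_iff] at h ⊢
  refine le_antisymm ?_ zero_le
  calc μ {y | ¬P (τ b y)} ≤ μ (τ b ⁻¹' ({x | ¬P x} ∩ τ b '' X)) + μ Xᶜ := by
        refine (measure_mono fun y hy => ?_).trans (measure_union_le _ _)
        by_cases hyX : y ∈ X
        · exact Or.inl ⟨hy, Set.mem_image_of_mem _ hyX⟩
        · exact Or.inr hyX
    _ ≤ (N : ℝ≥0∞) * μ ({x | ¬P x} ∩ τ b '' X) := by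
        rw [hX, add_zero]
        exact (Measure.le_map_apply hτ.aemeasurable _).trans
          (map_le_smul_of_eq_inv_smul_sum_map hμ hN hb _)
    _ ≤ (N : ℝ≥0∞) * μ.restrict (τ b '' X) {x | ¬P x} :=
        mul_le_mul_right (Measure.le_restrict_apply _ _) _
    _ = 0 := by rw [h, mul_zero]

end SelfSimilarMeasure

section HadamardMatrix

variable {d : ℕ}

def charMean (R : Matrix (Fin d) (Fin d) ℤ) (B : Finset (Fin d → ℤ)) (t : Fin d → ℝ) : ℂ :=
  (B.card : ℂ)⁻¹ * ∑ b ∈ B, expv ((Rmat R)⁻¹ *ᵥ vecR b) t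

variable {R : Matrix (Fin d) (Fin d) ℤ} {B L : Finset (Fin d → ℤ)}

lemma charMean_zero (hB : B.card ≠ 0) : charMean R B 0 = 1 := by
  simp [charMean, expv_zero_right, hB]

lemma inv_sqrt_natCast_mul_self (n : ℕ) :
    ((√(n : ℝ) : ℝ) : ℂ)⁻¹ * ((√(n : ℝ) : ℝ) : ℂ)⁻¹ = (n : ℂ)⁻¹ := by
  rw [← mul_inv, ← Complex.ofReal_mul, Real.mul_self_sqrt (Nat.cast_nonneg _)]
  norm_num

lemma conjTranspose_hadMat_mul_apply (l' l : L) :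
    ((hadMat R B L)ᴴ * hadMat R B L) l' l = charMean R B (vecR l - vecR l') := by
  rw [Matrix.mul_apply, charMean, Finset.mul_sum, ← Finset.sum_coe_sort B]
  refine Finset.sum_congr rfl fun b _ => ?_
  simp only [Matrix.conjTranspose_apply, hadMat, RCLike.star_def, map_mul, map_inv₀,
    Complex.conj_ofReal]
  rw [conj_expv_right, sub_eq_neg_add, expv_add_right, ← inv_sqrt_natCast_mul_self B.card]
  ring

lemma conjTranspose_hadMat_mul_eq_one_iff (hB : B.card ≠ 0) :
    (hadMat R B L)ᴴ * hadMat R B L = 1 ↔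
      ∀ l ∈ L, ∀ l' ∈ L, l ≠ l' → charMean R B (vecR l - vecR l') = 0 := by
  constructor
  · intro h l hl l' hl' hne
    have := congrFun (congrFun h ⟨l', hl'⟩) ⟨l, hl⟩
    rwa [conjTranspose_hadMat_mul_apply, Matrix.one_apply_ne (by simpa using hne.symm)] at this
  · intro h
    ext l' l
    rw [conjTranspose_hadMat_mul_apply, Matrix.one_apply]
    split_ifs with hll
    · rw [hll, sub_self, charMean_zero hB]
    · exact h l l.2 l' l'.2 fun h' => hll (Subtype.ext h'.symm)

end HadamardMatrix

section CuntzOperators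

variable {d : ℕ} {R : Matrix (Fin d) (Fin d) ℤ} {B L : Finset (Fin d → ℤ)}
  {μ : Measure (Fin d → ℝ)} {𝓡 : (Fin d → ℝ) → Fin d → ℝ}

lemma inner_eq_charMean_mul_integral
    (hμ : μ = (B.card : ℝ≥0∞)⁻¹ • ∑ b ∈ B, μ.map (tauB R b)) (hB : B.card ≠ 0)
    (h𝓡 : ∀ b ∈ B, ∀ᵐ y ∂μ, 𝓡 (tauB R b y) = y) {l l' : Fin d → ℤ}
    {T T' : Lp ℂ 2 μ →L[ℂ] Lp ℂ 2 μ}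
    (hT : ∀ f : Lp ℂ 2 μ,
      (T f : (Fin d → ℝ) → ℂ) =ᵐ[μ] fun x => expv (vecR l) x * f (𝓡 x))
    (hT' : ∀ f : Lp ℂ 2 μ,
      (T' f : (Fin d → ℝ) → ℂ) =ᵐ[μ] fun x => expv (vecR l') x * f (𝓡 x))
    (f g : Lp ℂ 2 μ) :
    ⟪T' f, T g⟫_ℂ = charMean R B (vecR l - vecR l') *
      ∫ y, expv ((vecR l - vecR l') ᵥ* (Rmat R)⁻¹) y * (conj (f y) * g y) ∂μ := by
  have hfg : (fun x => conj (T' f x) * T g x) =ᵐ[μ]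
      fun x => expv (vecR l - vecR l') x * (conj (f (𝓡 x)) * g (𝓡 x)) := by
    filter_upwards [hT g, hT' f] with x hg hf
    rw [hf, hg, map_mul, conj_expv, sub_eq_neg_add, expv_add_left]
    ring
  rw [L2.inner_eq_integral_conj_mul, integral_congr_ae hfg,
    integral_comp_eq_inv_smul_sum_integral (F := fun x y => expv (vecR l - vecR l') x *
      (conj (f y) * g y)) hμ hB (measurable_tauB R) h𝓡
      ((L2.integrable_inner (𝕜 := ℂ) (T' f) (T g)).congr
        (by simpa only [RCLike.inner_apply'] using hfg))]
  simp only [expv_tauB, mul_assoc, integral_const_mul, charMean, Complex.real_smul,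
    ← Finset.sum_mul]
  push_cast
  ring

lemma memLp_expv [IsFiniteMeasure μ] (t : Fin d → ℝ) (p : ℝ≥0∞) : MemLp (expv t) p μ :=
  MemLp.of_bound (continuous_expv t).aestronglyMeasurable 1
    (ae_of_all _ fun x => (norm_expv t x).le)

lemma adjoint_comp_self_eq_one
    (hμ : μ = (B.card : ℝ≥0∞)⁻¹ • ∑ b ∈ B, μ.map (tauB R b)) (hB : B.card ≠ 0)
    (h𝓡 : ∀ b ∈ B, ∀ᵐ y ∂μ, 𝓡 (tauB R b y) = y) {l : Fin d → ℤ}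
    {T : Lp ℂ 2 μ →L[ℂ] Lp ℂ 2 μ}
    (hT : ∀ f : Lp ℂ 2 μ,
      (T f : (Fin d → ℝ) → ℂ) =ᵐ[μ] fun x => expv (vecR l) x * f (𝓡 x)) :
    (ContinuousLinearMap.adjoint T).comp T = 1 := by
  refine (ContinuousLinearMap.adjoint_comp_eq_one_iff T T).2 fun f g => ?_
  simp only [inner_eq_charMean_mul_integral hμ hB h𝓡 hT hT, sub_self, charMean_zero hB,
    Matrix.zero_vecMul, expv_zero_left, one_mul, L2.inner_eq_integral_conj_mul]

lemma adjoint_comp_eq_zero_iff_charMean_eq_zero [IsProbabilityMeasure μ]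
    (hμ : μ = (B.card : ℝ≥0∞)⁻¹ • ∑ b ∈ B, μ.map (tauB R b)) (hB : B.card ≠ 0)
    (h𝓡 : ∀ b ∈ B, ∀ᵐ y ∂μ, 𝓡 (tauB R b y) = y) {l l' : Fin d → ℤ}
    {T T' : Lp ℂ 2 μ →L[ℂ] Lp ℂ 2 μ}
    (hT : ∀ f : Lp ℂ 2 μ,
      (T f : (Fin d → ℝ) → ℂ) =ᵐ[μ] fun x => expv (vecR l) x * f (𝓡 x))
    (hT' : ∀ f : Lp ℂ 2 μ,
      (T' f : (Fin d → ℝ) → ℂ) =ᵐ[μ] fun x => expv (vecR l') x * f (𝓡 x)) :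
    (ContinuousLinearMap.adjoint T).comp T' = 0 ↔ charMean R B (vecR l - vecR l') = 0 := by
  simp only [ContinuousLinearMap.adjoint_comp_eq_zero_iff,
    inner_eq_charMean_mul_integral hμ hB h𝓡 hT hT']
  refine ⟨fun h => ?_, fun h f g => by rw [h, zero_mul]⟩
  set ξ := (vecR l - vecR l') ᵥ* (Rmat R)⁻¹
  have hone : MemLp (fun _ => (1 : ℂ)) 2 μ := memLp_const 1
  have hexp : MemLp (expv (-ξ)) 2 μ := memLp_expv (-ξ) 2
  have h1 := h (hone.toLp _) (hexp.toLp _)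
  have hint : ∫ y, expv ξ y * (conj (hone.toLp _ y) * hexp.toLp _ y) ∂μ = 1 := by
    rw [integral_congr_ae (g := fun _ => 1), integral_const, probReal_univ, one_smul]
    filter_upwards [hone.coeFn_toLp, hexp.coeFn_toLp] with y h1 h2
    rw [h1, h2, map_one, one_mul, ← expv_add_left, add_neg_cancel, expv_zero_left]
  rwa [hint, mul_one] at h1

def cuntzAdjoint (R : Matrix (Fin d) (Fin d) ℤ) (B : Finset (Fin d → ℤ)) (l : Fin d → ℤ)
    (f : (Fin d → ℝ) → ℂ) (x : Fin d → ℝ) : ℂ :=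
  (B.card : ℂ)⁻¹ * ∑ b ∈ B, expv (-vecR l) (tauB R b x) * f (tauB R b x)

lemma MeasureTheory.MemLp.expv_mul {p : ℝ≥0∞} {f : (Fin d → ℝ) → ℂ} (hf : MemLp f p μ)
    (t : Fin d → ℝ) : MemLp (fun y => expv t y * f y) p μ :=
  hf.of_le ((continuous_expv _).aestronglyMeasurable.mul hf.1)
    (ae_of_all _ fun y => by rw [norm_mul, norm_expv, one_mul])

lemma memLp_cuntzAdjoint
    (hμ : μ = (B.card : ℝ≥0∞)⁻¹ • ∑ b ∈ B, μ.map (tauB R b)) (hB : B.card ≠ 0)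
    {l : Fin d → ℤ} {f : (Fin d → ℝ) → ℂ} (hf : MemLp f 2 μ) :
    MemLp (cuntzAdjoint R B l f) 2 μ :=
  (memLp_finsetSum B fun b hb => (hf.expv_mul _).comp_of_eq_inv_smul_sum_map hμ hB hb
    (measurable_tauB R b)).const_mul _

lemma adjoint_ae_eq_cuntzAdjoint
    (hμ : μ = (B.card : ℝ≥0∞)⁻¹ • ∑ b ∈ B, μ.map (tauB R b)) (hB : B.card ≠ 0)
    (h𝓡 : ∀ b ∈ B, ∀ᵐ y ∂μ, 𝓡 (tauB R b y) = y) {l : Fin d → ℤ}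
    {T : Lp ℂ 2 μ →L[ℂ] Lp ℂ 2 μ}
    (hT : ∀ f : Lp ℂ 2 μ,
      (T f : (Fin d → ℝ) → ℂ) =ᵐ[μ] fun x => expv (vecR l) x * f (𝓡 x))
    (f : Lp ℂ 2 μ) :
    (ContinuousLinearMap.adjoint T f : (Fin d → ℝ) → ℂ) =ᵐ[μ] cuntzAdjoint R B l f := by
  have hmem := memLp_cuntzAdjoint hμ hB (l := l) (Lp.memLp f)
  have hh := (Lp.memLp f).expv_mul (-vecR l)
  suffices ContinuousLinearMap.adjoint T f = hmem.toLp _ from this ▸ hmem.coeFn_toLp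
  refine ext_inner_right ℂ fun g => ?_
  have hfg : (fun x => conj (f x) * T g x) =ᵐ[μ]
      fun x => conj (expv (-vecR l) x * f x) * g (𝓡 x) := by
    filter_upwards [hT g] with x hx
    rw [hx, map_mul, conj_expv, neg_neg]
    ring
  rw [ContinuousLinearMap.adjoint_inner_left, L2.inner_eq_integral_conj_mul,
    L2.inner_eq_integral_conj_mul, integral_congr_ae hfg,
    integral_comp_eq_inv_smul_sum_integral (F := fun x y => conj (expv (-vecR l) x * f x) * g y)
      hμ hB (measurable_tauB R) h𝓡 ((L2.integrable_inner (𝕜 := ℂ) f (T g)).congr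
        (by simpa only [RCLike.inner_apply'] using hfg)),
    integral_congr_ae (hmem.coeFn_toLp.mono fun x hx => by rw [hx])]
  simp only [cuntzAdjoint, map_mul (starRingEnd ℂ) _⁻¹, map_inv₀, map_natCast, map_sum, mul_assoc,
    Finset.sum_mul, Complex.real_smul]
  rw [integral_const_mul, integral_finsetSum]
  · push_cast
    rfl
  · exact fun b hb =>
      (hh.comp_of_eq_inv_smul_sum_map hμ hB hb (measurable_tauB R b)).integrable_conj_mul
        (Lp.memLp g)

lemma cuntzAdjoint_eq_hadMat_mulVec (l : L) (f : (Fin d → ℝ) → ℂ) (x : Fin d → ℝ) :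
    cuntzAdjoint R B l f x = ((√(B.card : ℝ) : ℝ) : ℂ)⁻¹ * expv (-vecR l ᵥ* (Rmat R)⁻¹) x *
      ((hadMat R B L)ᴴ *ᵥ fun b : B => f (tauB R b x)) l := by
  rw [cuntzAdjoint, Matrix.mulVec, dotProduct, Finset.mul_sum, Finset.mul_sum,
    ← Finset.sum_coe_sort B]
  refine Finset.sum_congr rfl fun b _ => ?_
  simp only [Matrix.conjTranspose_apply, hadMat, RCLike.star_def, map_mul, map_inv₀,
    Complex.conj_ofReal, conj_expv_right, expv_tauB, ← inv_sqrt_natCast_mul_self B.card]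
  ring

lemma sum_conj_cuntzAdjoint_mul (hH : hadMat R B L * (hadMat R B L)ᴴ = 1)
    (f g : (Fin d → ℝ) → ℂ) (x : Fin d → ℝ) :
    ∑ l ∈ L, conj (cuntzAdjoint R B l f x) * cuntzAdjoint R B l g x =
      (B.card : ℂ)⁻¹ * ∑ b ∈ B, conj (f (tauB R b x)) * g (tauB R b x) := by
  set v : B → ℂ := fun b => f (tauB R b x)
  set w : B → ℂ := fun b => g (tauB R b x)
  have hl : ∀ l : L, conj (cuntzAdjoint R B l f x) * cuntzAdjoint R B l g x =
      (B.card : ℂ)⁻¹ * (star ((hadMat R B L)ᴴ *ᵥ v) l * ((hadMat R B L)ᴴ *ᵥ w) l) := by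
    intro l
    rw [cuntzAdjoint_eq_hadMat_mulVec, cuntzAdjoint_eq_hadMat_mulVec,
      ← inv_sqrt_natCast_mul_self B.card]
    simp only [map_mul, map_inv₀, Complex.conj_ofReal, Pi.star_apply, RCLike.star_def]
    linear_combination (((√(B.card : ℝ) : ℝ) : ℂ)⁻¹ * ((√(B.card : ℝ) : ℝ) : ℂ)⁻¹ *
      conj (((hadMat R B L)ᴴ *ᵥ v) l) * ((hadMat R B L)ᴴ *ᵥ w) l) *
      conj_expv_mul_self (-vecR l ᵥ* (Rmat R)⁻¹) x
  rw [← Finset.sum_coe_sort L, Finset.sum_congr rfl fun l _ => hl l, ← Finset.mul_sum,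
    ← dotProduct, Matrix.star_conjTranspose_mulVec_dotProduct hH, dotProduct,
    ← Finset.sum_coe_sort B]
  rfl

lemma sum_comp_adjoint_eq_one
    (hμ : μ = (B.card : ℝ≥0∞)⁻¹ • ∑ b ∈ B, μ.map (tauB R b)) (hB : B.card ≠ 0)
    (h𝓡 : ∀ b ∈ B, ∀ᵐ y ∂μ, 𝓡 (tauB R b y) = y) (hH : hadMat R B L * (hadMat R B L)ᴴ = 1)
    {S : (Fin d → ℤ) → Lp ℂ 2 μ →L[ℂ] Lp ℂ 2 μ}
    (hS : ∀ l ∈ L, ∀ f : Lp ℂ 2 μ,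
      (S l f : (Fin d → ℝ) → ℂ) =ᵐ[μ] fun x => expv (vecR l) x * f (𝓡 x)) :
    ∑ l ∈ L, (S l).comp (ContinuousLinearMap.adjoint (S l)) = 1 := by
  refine ContinuousLinearMap.ext fun f => ext_inner_right ℂ fun g => ?_
  have hf := Lp.memLp f
  have hg := Lp.memLp g
  rw [sum_apply, sum_inner, one_apply_eq_self]
  calc ∑ l ∈ L, ⟪(S l).comp (ContinuousLinearMap.adjoint (S l)) f, g⟫_ℂ
      = ∑ l ∈ L, ∫ x, conj (cuntzAdjoint R B l f x) * cuntzAdjoint R B l g x ∂μ := by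
        refine Finset.sum_congr rfl fun l hl => ?_
        rw [ContinuousLinearMap.comp_apply, ← ContinuousLinearMap.adjoint_inner_right,
          L2.inner_eq_integral_conj_mul]
        refine integral_congr_ae ?_
        filter_upwards [adjoint_ae_eq_cuntzAdjoint hμ hB h𝓡 (hS l hl) f,
          adjoint_ae_eq_cuntzAdjoint hμ hB h𝓡 (hS l hl) g] with x hfx hgx
        rw [hfx, hgx]
    _ = ∫ x, (B.card : ℂ)⁻¹ * ∑ b ∈ B, conj (f (tauB R b x)) * g (tauB R b x) ∂μ := by
        rw [← integral_finsetSum]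
        · simp only [sum_conj_cuntzAdjoint_mul hH]
        · exact fun l _ => (memLp_cuntzAdjoint hμ hB hf).integrable_conj_mul
            (memLp_cuntzAdjoint hμ hB hg)
    _ = ∫ x, conj (f x) * g x ∂μ := by
        rw [integral_eq_inv_smul_sum_integral_comp hμ hB (measurable_tauB R)
          (hf.integrable_conj_mul hg), integral_const_mul, integral_finsetSum,
          Complex.real_smul]
        · push_cast
          rfl
        · exact fun b hb =>
            (hf.comp_of_eq_inv_smul_sum_map hμ hB hb (measurable_tauB R b)).integrable_conj_mul
              (hg.comp_of_eq_inv_smul_sum_map hμ hB hb (measurable_tauB R b))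
    _ = ⟪f, g⟫_ℂ := (L2.inner_eq_integral_conj_mul f g).symm

end CuntzOperators

theorem stmt1_general
    (d N : ℕ) (R : Matrix (Fin d) (Fin d) ℤ) (hRexp : Expansive R)
    (B : Finset (Fin d → ℤ)) (hB0 : (0 : Fin d → ℤ) ∈ B) (hBcard : B.card = N)
    (X : Set (Fin d → ℝ))
    (μ : Measure (Fin d → ℝ)) [IsProbabilityMeasure μ]
    (hμinv : μ = (N : ENNReal)⁻¹ • ∑ b ∈ B, μ.map (tauB R b))
    (hμsupp : μ Xᶜ = 0)
    (𝓡 : (Fin d → ℝ) → (Fin d → ℝ))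
    (h𝓡 : ∀ b ∈ B, ∀ᵐ x ∂(μ.restrict (tauB R b '' X)),
      𝓡 x = (Rmat R).mulVec x - vecR b)
    (L : Finset (Fin d → ℤ)) (hLcard : L.card = N)
    (S : (Fin d → ℤ) → (Lp ℂ 2 μ →L[ℂ] Lp ℂ 2 μ))
    (hS : ∀ l ∈ L, ∀ f : Lp ℂ 2 μ,
      (S l f : (Fin d → ℝ) → ℂ) =ᵐ[μ] fun x => expv (vecR l) x * f (𝓡 x)) :
    ((∀ l ∈ L, ∀ l' ∈ L,
        (ContinuousLinearMap.adjoint (S l)).comp (S l') = if l = l' then 1 else 0) ∧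
      ∑ l ∈ L, (S l).comp (ContinuousLinearMap.adjoint (S l)) = 1) ↔
    IsHadamardPair R B L := by
  subst hBcard
  have hB : B.card ≠ 0 := Finset.card_ne_zero.2 ⟨0, hB0⟩
  have hfix : ∀ b ∈ B, ∀ᵐ y ∂μ, 𝓡 (tauB R b y) = y := fun b hb =>
    (ae_comp_of_ae_restrict_image hμinv hB hb (measurable_tauB R b) hμsupp (h𝓡 b hb)).mono
      fun y hy => by rw [hy, mulVec_tauB_sub (isUnit_det_Rmat hRexp)]
  have hortho : ∀ l ∈ L, ∀ l' ∈ L, (ContinuousLinearMap.adjoint (S l)).comp (S l') = 0 ↔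
      charMean R B (vecR l - vecR l') = 0 := fun l hl l' hl' =>
    adjoint_comp_eq_zero_iff_charMean_eq_zero hμinv hB hfix (hS l hl) (hS l' hl')
  constructor
  · rintro ⟨hrel, -⟩
    have hHH : (hadMat R B L)ᴴ * hadMat R B L = 1 :=
      (conjTranspose_hadMat_mul_eq_one_iff hB).2 fun l hl l' hl' hne =>
        (hortho l hl l' hl').1 (by simpa [hne] using hrel l hl l' hl')
    exact ⟨hHH, (Matrix.mul_eq_one_comm_of_equiv (Fintype.equivOfCardEq (by simp [hLcard]))).1 hHH⟩
  · rintro ⟨hHH, hHH'⟩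
    refine ⟨fun l hl l' hl' => ?_, sum_comp_adjoint_eq_one hμinv hB hfix hHH' hS⟩
    split_ifs with hll
    · subst hll
      exact adjoint_comp_self_eq_one hμinv hB hfix (hS l hl)
    · exact (hortho l hl l' hl').2 ((conjTranspose_hadMat_mul_eq_one_iff hB).1 hHH l hl l' hl' hll)

theorem stmt1
    (d N : ℕ) (R : Matrix (Fin d) (Fin d) ℤ) (hRexp : Expansive R)
    (B : Finset (Fin d → ℤ)) (hB0 : (0 : Fin d → ℤ) ∈ B) (hBcard : B.card = N)
    (X : Set (Fin d → ℝ)) (hXc : IsCompact X) (hXne : X.Nonempty)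
    (hX : X = ⋃ b ∈ B, tauB R b '' X)
    (μ : Measure (Fin d → ℝ)) [IsProbabilityMeasure μ]
    (hμinv : μ = (N : ENNReal)⁻¹ • ∑ b ∈ B, μ.map (tauB R b))
    (hμsupp : μ Xᶜ = 0)
    (hnooverlap : ∀ b ∈ B, ∀ b' ∈ B, b ≠ b' →
      μ (tauB R b '' X ∩ tauB R b' '' X) = 0)
    (𝓡 : (Fin d → ℝ) → (Fin d → ℝ)) (h𝓡meas : Measurable 𝓡)
    (h𝓡 : ∀ b ∈ B, ∀ᵐ x ∂(μ.restrict (tauB R b '' X)),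
      𝓡 x = (Rmat R).mulVec x - vecR b)
    (L : Finset (Fin d → ℤ)) (hL0 : (0 : Fin d → ℤ) ∈ L) (hLcard : L.card = N)
    (S : (Fin d → ℤ) → (Lp ℂ 2 μ →L[ℂ] Lp ℂ 2 μ))
    (hS : ∀ l ∈ L, ∀ f : Lp ℂ 2 μ,
      (S l f : (Fin d → ℝ) → ℂ) =ᵐ[μ] fun x => expv (vecR l) x * f (𝓡 x)) :
    ((∀ l ∈ L, ∀ l' ∈ L,
        (ContinuousLinearMap.adjoint (S l)).comp (S l') = if l = l' then 1 else 0) ∧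
      ∑ l ∈ L, (S l).comp (ContinuousLinearMap.adjoint (S l)) = 1) ↔
    IsHadamardPair R B L :=
  stmt1_general d N R hRexp B hB0 hBcard X μ hμinv hμsupp 𝓡 h𝓡 L hLcard S hS
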